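/- For every fixed u ∈ ℝ with u ≥ 0, the map α ↦ G(α,u) is concave on (0,1), where G(α,u) = 2 − Φ(Φ⁻¹(1−α/2)+u) − Φ(Φ⁻¹(1−α/2)−u). -/

import Mathlib

open MeasureTheory ProbabilityTheory Filter

/-- The standard normal CDF. -/
noncomputable def Phi (x : ℝ) : ℝ :=
  ∫ t in Set.Iic x, Real.exp (-t ^ 2 / 2) / Real.sqrt (2 * Real.pi)

/-- The inverse of the standard normal CDF (on `(0,1)`). -/
noncomputable def PhiInv : ℝ → ℝ := Function.invFun Phi

/-- The function `G(α, u)` of the paper. -/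
noncomputable def G (α u : ℝ) : ℝ :=
  2 - Phi (PhiInv (1 - α / 2) + u) - Phi (PhiInv (1 - α / 2) - u)

/-!
Differentiating in `α`, with `q = Φ⁻¹(1 - α/2)` and `dq/dα = -1/(2φ(q))`, gives
`∂G/∂α = (φ(q + u) + φ(q - u)) / (2φ(q)) = e^{-u²/2} cosh(qu)`.
As `α` increases on `(0,1)`, `q` decreases through positive values, so `|qu|` and hence the
derivative decrease: `G(·, u)` is concave.
-/

open Set Real Topology

section IntegralIic

variable {f : ℝ → ℝ}

lemma hasDerivAt_integral_Iic (hf : Continuous f) (hfi : Integrable f) (x : ℝ) :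
    HasDerivAt (fun y => ∫ t in Iic y, f t) (f x) x := by
  have hsplit :
      (fun y => ∫ t in Iic y, f t) = fun y => (∫ t in Iic 0, f t) + ∫ t in (0)..y, f t :=
    funext fun y => by
      rw [← intervalIntegral.integral_Iic_sub_Iic hfi.integrableOn hfi.integrableOn]; ring
  rw [hsplit]
  exact (hf.integral_hasStrictDerivAt 0 x).hasDerivAt.const_add _

lemma tendsto_integral_Iic_atTop (hfi : Integrable f) :
    Tendsto (fun x => ∫ t in Iic x, f t) atTop (𝓝 (∫ t, f t)) :=
  (aecover_Iic tendsto_id).integral_tendsto_of_countably_generated hfi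

lemma tendsto_integral_Iic_atBot (hfi : Integrable f) :
    Tendsto (fun x => ∫ t in Iic x, f t) atBot (𝓝 0) := by
  have hIoi := (aecover_Ioi tendsto_id).integral_tendsto_of_countably_generated hfi
  have hsplit : ∀ x, ∫ t in Iic x, f t = (∫ t, f t) - ∫ t in Ioi x, f t := fun x => by
    rw [← intervalIntegral.integral_Iic_add_Ioi hfi.integrableOn hfi.integrableOn]; ring
  simpa [hsplit] using (tendsto_const_nhds (x := ∫ t, f t)).sub hIoi

end IntegralIic

lemma continuous_gaussianPDFReal (μ : ℝ) (v : NNReal) : Continuous (gaussianPDFReal μ v) := by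
  rw [gaussianPDFReal_def]; fun_prop

lemma gaussianPDFReal_neg (v : NNReal) (x : ℝ) :
    gaussianPDFReal 0 v (-x) = gaussianPDFReal 0 v x := by
  simp [gaussianPDFReal_def]

lemma gaussianPDFReal_add_add_sub (v : NNReal) (q u : ℝ) :
    gaussianPDFReal 0 v (q + u) + gaussianPDFReal 0 v (q - u)
      = 2 * rexp (-u ^ 2 / (2 * v)) * cosh (u * q / v) * gaussianPDFReal 0 v q := by
  simp only [gaussianPDFReal_def, cosh_eq, sub_zero]
  rw [show -(q + u) ^ 2 / (2 * v) = -u ^ 2 / (2 * v) + -(u * q / v) + -q ^ 2 / (2 * v) by ring,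
    show -(q - u) ^ 2 / (2 * v) = -u ^ 2 / (2 * v) + u * q / v + -q ^ 2 / (2 * v) by ring]
  simp only [exp_add]
  ring

lemma Phi_eq : Phi = fun x => ∫ t in Iic x, gaussianPDFReal 0 1 t := by
  funext x
  simp only [Phi, gaussianPDFReal_def, NNReal.coe_one, mul_one, sub_zero, div_eq_inv_mul]

lemma hasDerivAt_Phi (x : ℝ) : HasDerivAt Phi (gaussianPDFReal 0 1 x) x := by
  rw [Phi_eq]
  exact hasDerivAt_integral_Iic (continuous_gaussianPDFReal 0 1) (integrable_gaussianPDFReal 0 1) x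

lemma continuous_Phi : Continuous Phi :=
  continuous_iff_continuousAt.2 fun x => (hasDerivAt_Phi x).continuousAt

lemma Phi_strictMono : StrictMono Phi :=
  strictMono_of_hasDerivAt_pos hasDerivAt_Phi fun x => gaussianPDFReal_pos 0 1 x one_ne_zero

lemma tendsto_Phi_atTop : Tendsto Phi atTop (𝓝 1) := by
  simpa [Phi_eq, integral_gaussianPDFReal_eq_one] using
    tendsto_integral_Iic_atTop (integrable_gaussianPDFReal 0 1)

lemma tendsto_Phi_atBot : Tendsto Phi atBot (𝓝 0) := by
  simpa [Phi_eq] using tendsto_integral_Iic_atBot (integrable_gaussianPDFReal 0 1)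

lemma Phi_mem_Ioo (x : ℝ) : Phi x ∈ Ioo (0 : ℝ) 1 :=
  ⟨(Phi_strictMono.monotone.le_of_tendsto tendsto_Phi_atBot (x - 1)).trans_lt
      (Phi_strictMono (sub_one_lt x)),
    (Phi_strictMono (lt_add_one x)).trans_le
      (Phi_strictMono.monotone.ge_of_tendsto tendsto_Phi_atTop (x + 1))⟩

lemma Phi_zero : Phi 0 = 1 / 2 := by
  have hint := integrable_gaussianPDFReal 0 1
  have htotal := intervalIntegral.integral_Iic_add_Ioi (b := 0) hint.integrableOn hint.integrableOn
  have hsymm := integral_comp_neg_Ioi 0 (gaussianPDFReal 0 1)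
  simp only [gaussianPDFReal_neg, neg_zero] at hsymm
  rw [integral_gaussianPDFReal_eq_one 0 one_ne_zero, hsymm] at htotal
  rw [Phi_eq]
  linarith

lemma exists_Phi_eq {y : ℝ} (hy : y ∈ Ioo (0 : ℝ) 1) : ∃ x, Phi x = y := by
  obtain ⟨a, ha⟩ := (tendsto_Phi_atBot.eventually_lt_const hy.1).exists
  obtain ⟨b, hb⟩ := (tendsto_Phi_atTop.eventually_const_lt hy.2).exists
  exact intermediate_value_univ a b continuous_Phi ⟨ha.le, hb.le⟩

lemma Phi_PhiInv {y : ℝ} (hy : y ∈ Ioo (0 : ℝ) 1) : Phi (PhiInv y) = y :=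
  Function.invFun_eq (exists_Phi_eq hy)

lemma PhiInv_Phi (x : ℝ) : PhiInv (Phi x) = x :=
  Function.leftInverse_invFun Phi_strictMono.injective x

lemma PhiInv_strictMonoOn : StrictMonoOn PhiInv (Ioo (0 : ℝ) 1) := fun a ha b hb hab =>
  Phi_strictMono.lt_iff_lt.1 (by rwa [Phi_PhiInv ha, Phi_PhiInv hb])

lemma PhiInv_image_Ioo : PhiInv '' Ioo (0 : ℝ) 1 = univ :=
  eq_univ_of_forall fun x => ⟨Phi x, Phi_mem_Ioo x, PhiInv_Phi x⟩

lemma hasDerivAt_PhiInv {y : ℝ} (hy : y ∈ Ioo (0 : ℝ) 1) :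
    HasDerivAt PhiInv (gaussianPDFReal 0 1 (PhiInv y))⁻¹ y := by
  have hcont : ContinuousAt PhiInv y :=
    PhiInv_strictMonoOn.continuousAt_of_image_mem_nhds (isOpen_Ioo.mem_nhds hy)
      (by rw [PhiInv_image_Ioo]; exact univ_mem)
  exact HasDerivAt.of_local_left_inverse hcont (hasDerivAt_Phi _)
    (gaussianPDFReal_pos 0 1 _ one_ne_zero).ne'
    (eventually_of_mem (isOpen_Ioo.mem_nhds hy) fun z hz => Phi_PhiInv hz)

lemma PhiInv_pos {y : ℝ} (hy : y ∈ Ioo (1 / 2 : ℝ) 1) : 0 < PhiInv y := by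
  rw [← PhiInv_Phi 0, Phi_zero]
  exact PhiInv_strictMonoOn (by norm_num) (Ioo_subset_Ioo_left (by norm_num) hy) hy.1

lemma one_sub_half_mem_Ioo {α : ℝ} (hα : α ∈ Ioo (0 : ℝ) 1) :
    1 - α / 2 ∈ Ioo (1 / 2 : ℝ) 1 :=
  ⟨by linarith [hα.2], by linarith [hα.1]⟩

lemma hasDerivAt_G (u : ℝ) {α : ℝ} (hα : α ∈ Ioo (0 : ℝ) 1) :
    HasDerivAt (fun α => G α u) (rexp (-u ^ 2 / 2) * cosh (u * PhiInv (1 - α / 2))) α := by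
  have hy := Ioo_subset_Ioo_left (by norm_num : (0 : ℝ) ≤ 1 / 2) (one_sub_half_mem_Ioo hα)
  set q := PhiInv (1 - α / 2)
  have hq : HasDerivAt (fun α => PhiInv (1 - α / 2))
      ((gaussianPDFReal 0 1 q)⁻¹ * (-(1 / 2))) α := by
    refine (hasDerivAt_PhiInv hy).comp α ?_
    simpa using ((hasDerivAt_id α).div_const 2).const_sub 1
  have hsum := ((hasDerivAt_Phi (q + u)).comp α (hq.add_const u)).add
    ((hasDerivAt_Phi (q - u)).comp α (hq.sub_const u))
  have hG : (fun α => G α u)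
      = fun β => 2 - (Phi (PhiInv (1 - β / 2) + u) + Phi (PhiInv (1 - β / 2) - u)) := by
    funext β; simp only [G]; ring
  rw [hG]
  refine (hsum.const_sub 2).congr_deriv ?_
  have hpos := (gaussianPDFReal_pos 0 1 q one_ne_zero).ne'
  rw [← add_mul, gaussianPDFReal_add_add_sub, NNReal.coe_one, mul_one, div_one]
  field_simp

lemma antitoneOn_cosh_mul_PhiInv (u : ℝ) :
    AntitoneOn (fun α => cosh (u * PhiInv (1 - α / 2))) (Ioo (0 : ℝ) 1) := by
  intro a ha b hb hab
  have hqa := one_sub_half_mem_Ioo ha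
  have hqb := one_sub_half_mem_Ioo hb
  have hle : PhiInv (1 - b / 2) ≤ PhiInv (1 - a / 2) :=
    PhiInv_strictMonoOn.monotoneOn (Ioo_subset_Ioo_left (by norm_num) hqb)
      (Ioo_subset_Ioo_left (by norm_num) hqa) (by linarith)
  simp only [cosh_le_cosh, abs_mul, abs_of_pos (PhiInv_pos hqa), abs_of_pos (PhiInv_pos hqb)]
  exact mul_le_mul_of_nonneg_left hle (abs_nonneg u)

theorem G_concaveOn_general (u : ℝ) :
    ConcaveOn ℝ (Set.Ioo (0 : ℝ) 1) (fun α => G α u) := by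
  have hG := fun α (hα : α ∈ Ioo (0 : ℝ) 1) => hasDerivAt_G u hα
  refine AntitoneOn.concaveOn_of_deriv (convex_Ioo 0 1)
    (fun α hα => (hG α hα).continuousAt.continuousWithinAt) ?_ ?_ <;> rw [interior_Ioo]
  · exact fun α hα => (hG α hα).differentiableAt.differentiableWithinAt
  · intro a ha b hb hab
    rw [(hG a ha).deriv, (hG b hb).deriv]
    exact mul_le_mul_of_nonneg_left (antitoneOn_cosh_mul_PhiInv u ha hb hab) (exp_nonneg _)

/-- For every fixed `u ≥ 0`, the map `α ↦ G(α,u)` is concave on `(0,1)`. -/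
theorem G_concaveOn (u : ℝ) (hu : 0 ≤ u) :
    ConcaveOn ℝ (Set.Ioo (0 : ℝ) 1) (fun α => G α u) :=
  G_concaveOn_general u
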